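/- arXiv:2208.00514 — 2 statements merged into one kernel-verified Lean document; each statement's English description precedes it below -/
import Mathlib

section
/- Let L be the Lie algebra spanned by derivations z^γ D^{(n)} (with [γ] ≥ 0) and partial_i (i = 0,...,d), with bracket the commutator of derivations. Define the bracket [.,.]_0 on the same vector space by: [x,y]_0 = 0 if x, y are both of the form z^γ D^{(n)} or both of the form partial_i, and [z^γ D^{(n)}, partial_i]_0 = n_i z^γ D^{(n-e_i)}. Define the product ▶̂ by: z^γ D^{(n)} ▶̂ z^{γ'} D^{(n')} = (action of z^γ D^{(n)} as derivation on the coefficient z^{γ'}) D^{(n')}, partial_i ▶̂ z^γ D^{(n)} = (partial_i z^γ) D^{(n)} acting as derivation, z^γ D^{(n)} ▶̂ partial_i = 0, partial_i ▶̂ partial_j = 0. Then (L, [.,.]_0, ▶̂) is a post-Lie algebra. -/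
open MvPolynomial

/-- Multi-indices in `ℕ^{d+1}`. -/
abbrev MIdx (d : ℕ) := Fin (d + 1) → ℕ

/-- The `i`-th canonical basis vector of `ℕ^{d+1}`. -/
def eVec (d : ℕ) (i : Fin (d + 1)) : MIdx d := Pi.single i 1

/-- The variables `z_k` (`k ∈ ℕ`) and `z_n` (`n ∈ ℕ^{d+1}`, `n ≠ 0`). -/
abbrev Var (d : ℕ) := ℕ ⊕ {n : MIdx d // n ≠ 0}

/-- The polynomial algebra `ℝ[z_k, z_n]`. -/
abbrev Rg (d : ℕ) := MvPolynomial (Var d) ℝ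

lemma eVec_ne_zero {d : ℕ} (i : Fin (d + 1)) : eVec d i ≠ 0 := by
  intro h
  have := congrFun h i
  simp [eVec] at this

lemma add_eVec_ne_zero {d : ℕ} (n : MIdx d) (i : Fin (d + 1)) :
    n + eVec d i ≠ 0 := by
  intro h
  have := congrFun h i
  simp [eVec] at this

/-- The derivation `D^{(n)}`: `D^{(0)} = ∑_k (k+1) z_{k+1} ∂_{z_k}` and
`D^{(n)} = ∂_{z_n}` for `n ≠ 0`. -/
noncomputable def Dop {d : ℕ} (n : MIdx d) : Derivation ℝ (Rg d) (Rg d) :=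
  if n = 0 then
    MvPolynomial.mkDerivation ℝ (fun v =>
      match v with
      | .inl k => ((k + 1 : ℕ) : ℝ) • (X (.inl (k + 1)) : Rg d)
      | .inr _ => 0)
  else
    MvPolynomial.mkDerivation ℝ (fun v =>
      match v with
      | .inl _ => 0
      | .inr m => if m.val = n then 1 else 0)

/-- The derivation `∂_i = ∑_n (n_i + 1) z_{n+e_i} D^{(n)}`: it sends
`z_k ↦ (k+1) z_{e_i} z_{k+1}` (the `n = 0` contribution) and
`z_m ↦ (m_i + 1) z_{m+e_i}` for `m ≠ 0`. -/
noncomputable def partialOp {d : ℕ} (i : Fin (d + 1)) :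
    Derivation ℝ (Rg d) (Rg d) :=
  MvPolynomial.mkDerivation ℝ (fun v =>
    match v with
    | .inl k => ((k + 1 : ℕ) : ℝ) •
        ((X (.inr ⟨eVec d i, eVec_ne_zero i⟩) : Rg d) * X (.inl (k + 1)))
    | .inr m => ((m.val i + 1 : ℕ) : ℝ) •
        (X (.inr ⟨m.val + eVec d i, add_eVec_ne_zero m.val i⟩) : Rg d))


/-- `[γ] = ∑_k k γ(k) - ∑_{n ≠ 0} γ(n)` for a multi-index `γ` over the variables. -/
def bc {d : ℕ} (γ : Var d →₀ ℕ) : ℤ :=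
  γ.sum fun v m =>
    match v with
    | .inl k => (m * k : ℤ)
    | .inr _ => -(m : ℤ)

/-- The derivation `z^γ D^{(n)}`. -/
noncomputable def zD {d : ℕ} (γ : Var d →₀ ℕ) (n : MIdx d) :
    Derivation ℝ (Rg d) (Rg d) :=
  (MvPolynomial.monomial γ (1 : ℝ) : Rg d) • Dop n

/-- Basis of `L`: the symbols `z^γ D^{(n)}` with `[γ] ≥ 0`, together with the
symbols `∂_i`. -/
abbrev LBasis (d : ℕ) :=
  {p : (Var d →₀ ℕ) × MIdx d // 0 ≤ bc p.1} ⊕ Fin (d + 1)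

/-- The vector space `L` spanned by the `z^γ D^{(n)}` (`[γ] ≥ 0`) and the `∂_i`. -/
abbrev LSpace (d : ℕ) := LBasis d →₀ ℝ

noncomputable def ofL {d : ℕ} (x : LBasis d) : LSpace d := Finsupp.single x 1

/-- Expansion of a polynomial coefficient in the basis of `L` (with fixed `D^{(n')}`),
keeping only the monomials `z^β` with `[β] ≥ 0`. -/
noncomputable def toL {d : ℕ} (p : Rg d) (n' : MIdx d) : LSpace d :=
  p.support.sum fun β =>
    if h : 0 ≤ bc β then
      MvPolynomial.coeff β p • Finsupp.single (Sum.inl ⟨(β, n'), h⟩) (1 : ℝ)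
    else 0

/-- The bracket `[·,·]_0` on basis elements: zero except for
`[z^γ D^{(n)}, ∂_i]_0 = n_i z^γ D^{(n-e_i)}` (and its antisymmetric counterpart). -/
noncomputable def brL0 {d : ℕ} : LBasis d → LBasis d → LSpace d
  | .inl ⟨(γ, n), h⟩, .inr i =>
      (n i : ℝ) • Finsupp.single (.inl ⟨(γ, n - eVec d i), h⟩) 1
  | .inr i, .inl ⟨(γ, n), h⟩ =>
      -((n i : ℝ) • Finsupp.single (.inl ⟨(γ, n - eVec d i), h⟩) 1)
  | _, _ => 0

/-- Bilinear extension of `[·,·]_0` to `L`. -/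
noncomputable def brL {d : ℕ} : LSpace d →ₗ[ℝ] LSpace d →ₗ[ℝ] LSpace d :=
  Finsupp.lift _ ℝ (LBasis d) fun x =>
    Finsupp.lift (LSpace d) ℝ (LBasis d) fun y => brL0 x y

/-- The product `▶̂` on basis elements:
`z^γ D^{(n)} ▶̂ z^{γ'} D^{(n')} = (z^γ D^{(n)} ▸ z^{γ'}) D^{(n')}` (action on the
coefficient as a derivation), `∂_i ▶̂ z^γ D^{(n)} = (∂_i z^γ) D^{(n)}`,
`z^γ D^{(n)} ▶̂ ∂_i = 0`, `∂_i ▶̂ ∂_j = 0`. -/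
noncomputable def triL0 {d : ℕ} : LBasis d → LBasis d → LSpace d
  | .inl ⟨(γ, n), _⟩, .inl ⟨(γ', n'), _⟩ =>
      toL (zD γ n (MvPolynomial.monomial γ' (1 : ℝ))) n'
  | .inr i, .inl ⟨(γ, n), _⟩ =>
      toL (partialOp i (MvPolynomial.monomial γ (1 : ℝ))) n
  | _, _ => 0

/-- Bilinear extension of `▶̂` to `L`. -/
noncomputable def triL {d : ℕ} : LSpace d →ₗ[ℝ] LSpace d →ₗ[ℝ] LSpace d :=
  Finsupp.lift _ ℝ (LBasis d) fun x =>
    Finsupp.lift (LSpace d) ℝ (LBasis d) fun y => triL0 x y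

/-! ### Multi-index arithmetic -/

section MIdxLemmas
variable {d : ℕ}

lemma eVec_apply (i j : Fin (d+1)) : eVec d i j = if j = i then 1 else 0 := by
  simp [eVec, Pi.single_apply]

lemma sub_eVec_apply (n : MIdx d) (i j : Fin (d+1)) :
    (n - eVec d i) j = n j - eVec d i j := rfl

lemma sub_eVec_apply_ne (n : MIdx d) {i j : Fin (d+1)} (h : j ≠ i) :
    (n - eVec d i) j = n j := by
  simp [sub_eVec_apply, eVec_apply, h]

lemma sub_eVec_comm (n : MIdx d) (i j : Fin (d+1)) :
    n - eVec d i - eVec d j = n - eVec d j - eVec d i := by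
  funext k
  simp only [sub_eVec_apply]
  omega

lemma sub_eVec_eq_zero {n : MIdx d} {i : Fin (d+1)} (h : n - eVec d i = 0) :
    n = 0 ∨ n = eVec d i := by
  by_cases hi : n i = 0
  · left; funext j
    have := congrFun h j
    simp only [sub_eVec_apply, eVec_apply, Pi.zero_apply] at this ⊢
    by_cases hj : j = i
    · subst hj; exact hi
    · simpa [hj] using this
  · right; funext j
    have := congrFun h j
    simp only [sub_eVec_apply, eVec_apply, Pi.zero_apply] at this ⊢
    by_cases hj : j = i <;> simp [hj] at this ⊢ <;> omega

lemma sub_eVec_add_cancel {n : MIdx d} {i : Fin (d+1)} (h : n i ≠ 0) :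
    n - eVec d i + eVec d i = n := by
  funext j
  simp only [Pi.add_apply, sub_eVec_apply, eVec_apply]
  by_cases hj : j = i <;> simp [hj] <;> omega

lemma add_eVec_sub_cancel (m : MIdx d) (i : Fin (d+1)) :
    m + eVec d i - eVec d i = m := by
  funext j
  simp only [Pi.add_apply, sub_eVec_apply]
  omega

lemma add_eVec_apply (m : MIdx d) (i : Fin (d+1)) : (m + eVec d i) i = m i + 1 := by
  simp [Pi.add_apply, eVec_apply]

end MIdxLemmas

/-! ### Weight lemmas for `bc` -/

section BcLemmas
variable {d : ℕ}

/-- Weight of a variable. -/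
def wVar : Var d → ℤ
  | .inl k => k
  | .inr _ => -1

lemma bc_eq (γ : Var d →₀ ℕ) : bc γ = γ.sum fun v m => (m : ℤ) * wVar v := by
  unfold bc
  refine Finsupp.sum_congr fun v _ => ?_
  cases v <;> simp [wVar] <;> ring

lemma bc_zero : bc (0 : Var d →₀ ℕ) = 0 := by simp [bc_eq]

lemma bc_add (a b : Var d →₀ ℕ) : bc (a + b) = bc a + bc b := by
  simp only [bc_eq]
  exact Finsupp.sum_add_index' (by simp) (by intros; push_cast; ring)

lemma bc_single (v : Var d) (m : ℕ) : bc (Finsupp.single v m) = m * wVar v := by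
  rw [bc_eq]
  exact Finsupp.sum_single_index (by simp)
end BcLemmas
/-! ### Values of the derivations on generators -/

section DerivX
variable {d : ℕ}

lemma Dop_zero_X_inl (k : ℕ) :
    Dop (0 : MIdx d) (X (.inl k)) = ((k + 1 : ℕ) : ℝ) • (X (.inl (k+1)) : Rg d) := by
  rw [Dop, if_pos rfl, mkDerivation_X]

lemma Dop_zero_X_inr (m : {n : MIdx d // n ≠ 0}) :
    Dop (0 : MIdx d) (X (.inr m)) = 0 := by
  rw [Dop, if_pos rfl, mkDerivation_X]

lemma Dop_X_inl {n : MIdx d} (hn : n ≠ 0) (k : ℕ) :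
    Dop n (X (.inl k) : Rg d) = 0 := by
  rw [Dop, if_neg hn, mkDerivation_X]

lemma Dop_X_inr {n : MIdx d} (hn : n ≠ 0) (m : {n : MIdx d // n ≠ 0}) :
    Dop n (X (.inr m) : Rg d) = if m.val = n then 1 else 0 := by
  rw [Dop, if_neg hn, mkDerivation_X]

lemma partialOp_X_inl (i : Fin (d+1)) (k : ℕ) :
    partialOp i (X (.inl k) : Rg d) = ((k + 1 : ℕ) : ℝ) •
      ((X (.inr ⟨eVec d i, eVec_ne_zero i⟩) : Rg d) * X (.inl (k + 1))) := by
  rw [partialOp, mkDerivation_X]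

lemma partialOp_X_inr (i : Fin (d+1)) (m : {n : MIdx d // n ≠ 0}) :
    partialOp i (X (.inr m) : Rg d) = ((m.val i + 1 : ℕ) : ℝ) •
      (X (.inr ⟨m.val + eVec d i, add_eVec_ne_zero m.val i⟩) : Rg d) := by
  rw [partialOp, mkDerivation_X]

end DerivX

/-! ### Homogeneity of the derivations w.r.t. `bc` -/

section Homog
variable {d : ℕ}

lemma bc_support_mkDerivation (f : Var d → Rg d) (t : ℤ)
    (hf : ∀ v, ∀ β ∈ (f v).support, bc β = bc (Finsupp.single v 1) + t)
    (s : Var d →₀ ℕ) (r : ℝ) :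
    ∀ β ∈ (mkDerivation ℝ f (monomial s r) : Rg d).support, bc β = bc s + t := by
  intro β hβ
  rw [mkDerivation_monomial] at hβ
  have hβ' := MvPolynomial.support_smul hβ
  rw [Finsupp.sum] at hβ'
  have h2 := by classical exact MvPolynomial.support_sum hβ'
  rw [Finset.mem_biUnion] at h2
  obtain ⟨v, hv, hmem⟩ := h2
  -- term : monomial (s - single v 1) (s v : ℝ) • f v = monomial ... * f v
  rw [smul_eq_mul] at hmem
  classical
  have h3 := MvPolynomial.support_mul _ _ hmem
  rw [Finset.mem_add] at h3
  obtain ⟨a, ha, b, hb, rfl⟩ := h3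
  rw [MvPolynomial.support_monomial] at ha
  have hsv : ((s v : ℝ)) ≠ 0 := by
    exact_mod_cast Finsupp.mem_support_iff.mp hv
  rw [if_neg hsv, Finset.mem_singleton] at ha
  subst ha
  have hb' := hf v b hb
  have hle : Finsupp.single v 1 ≤ s := by
    rw [Finsupp.single_le_iff]
    exact Nat.one_le_iff_ne_zero.mpr (Finsupp.mem_support_iff.mp hv)
  have hs : s - Finsupp.single v 1 + Finsupp.single v 1 = s :=
    tsub_add_cancel_of_le hle
  have : bc (s - Finsupp.single v 1) + bc (Finsupp.single v 1) = bc s := by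
    rw [← bc_add, hs]
  rw [bc_add, hb']
  omega

end Homog
section Homog2
variable {d : ℕ}

lemma bc_support_Dop (n : MIdx d) (s : Var d →₀ ℕ) (r : ℝ) :
    ∀ β ∈ (Dop n (monomial s r) : Rg d).support, bc β = bc s + 1 := by
  classical
  by_cases hn : n = 0
  · subst hn
    rw [Dop, if_pos rfl]
    refine bc_support_mkDerivation _ 1 ?_ s r
    rintro (k | m) β hβ
    · have := MvPolynomial.support_smul hβ
      rw [MvPolynomial.support_X, Finset.mem_singleton] at this
      subst this
      simp [bc_single, wVar]
    · simp at hβ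
  · rw [Dop, if_neg hn]
    refine bc_support_mkDerivation _ 1 ?_ s r
    rintro (k | m) β hβ
    · simp at hβ
    · dsimp only at hβ
      by_cases hm : m.val = n
      · rw [if_pos hm] at hβ
        have h1 : β ∈ ((monomial 0 1 : Rg d)).support := by
          rw [monomial_zero']
          simpa using hβ
        rw [MvPolynomial.support_monomial, if_neg one_ne_zero, Finset.mem_singleton] at h1
        subst h1
        simp [bc_zero, bc_single, wVar]
      · rw [if_neg hm] at hβ; simp at hβ
  
lemma bc_support_partialOp (i : Fin (d+1)) (s : Var d →₀ ℕ) (r : ℝ) :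
    ∀ β ∈ (partialOp i (monomial s r) : Rg d).support, bc β = bc s := by
  classical
  rw [partialOp]
  have := bc_support_mkDerivation (d := d) (fun v =>
    match v with
    | .inl k => ((k + 1 : ℕ) : ℝ) •
        ((X (.inr ⟨eVec d i, eVec_ne_zero i⟩) : Rg d) * X (.inl (k + 1)))
    | .inr m => ((m.val i + 1 : ℕ) : ℝ) •
        (X (.inr ⟨m.val + eVec d i, add_eVec_ne_zero m.val i⟩) : Rg d)) 0 ?_ s r
  · simpa using this
  · rintro (k | m) β hβ
    · have h1 := MvPolynomial.support_smul hβ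
      have h2 := MvPolynomial.support_mul _ _ h1
      rw [Finset.mem_add] at h2
      obtain ⟨a, ha, b, hb, rfl⟩ := h2
      rw [MvPolynomial.support_X, Finset.mem_singleton] at ha hb
      subst ha; subst hb
      simp only [bc_add, bc_single, wVar]
      push_cast
      ring
    · have h1 := MvPolynomial.support_smul hβ
      rw [MvPolynomial.support_X, Finset.mem_singleton] at h1
      subst h1
      simp [bc_single, wVar]

lemma bc_support_zD (γ : Var d →₀ ℕ) (n : MIdx d) (s : Var d →₀ ℕ) (r : ℝ) :
    ∀ β ∈ (zD γ n (monomial s r) : Rg d).support, bc β = bc γ + bc s + 1 := by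
  classical
  intro β hβ
  rw [zD, Derivation.smul_apply, smul_eq_mul] at hβ
  have h2 := MvPolynomial.support_mul _ _ hβ
  rw [Finset.mem_add] at h2
  obtain ⟨a, ha, b, hb, rfl⟩ := h2
  rw [MvPolynomial.support_monomial, if_neg (one_ne_zero), Finset.mem_singleton] at ha
  subst ha
  rw [bc_add, bc_support_Dop n s r b hb]
  try ring

end Homog2
/-! ### Linearity of `toL` -/

section ToL
variable {d : ℕ}

/-- summand of `toL` -/
noncomputable def gto (n : MIdx d) (β : Var d →₀ ℕ) (c : ℝ) : LSpace d :=
  if h : 0 ≤ bc β then c • Finsupp.single (Sum.inl ⟨(β, n), h⟩) (1 : ℝ) else 0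

lemma gto_zero (n : MIdx d) (β) : gto n β 0 = 0 := by
  unfold gto; split <;> simp

lemma gto_add (n : MIdx d) (β) (c₁ c₂ : ℝ) :
    gto n β (c₁ + c₂) = gto n β c₁ + gto n β c₂ := by
  unfold gto; split <;> simp [add_smul]

lemma gto_mul (n : MIdx d) (β) (r c : ℝ) : gto n β (r * c) = r • gto n β c := by
  unfold gto; split <;> simp [mul_smul]

lemma toL_eq_sum (p : Rg d) (n : MIdx d) :
    toL p n = Finsupp.sum (AddMonoidAlgebra.coeff p) (gto n) := by
  unfold toL Finsupp.sum gto
  exact Finset.sum_congr rfl fun β _ => rfl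

lemma toL_zero (n : MIdx d) : toL (0 : Rg d) n = 0 := by
  simp [toL]

lemma toL_add (p q : Rg d) (n : MIdx d) : toL (p + q) n = toL p n + toL q n := by
  simp only [toL_eq_sum]
  rw [AddMonoidAlgebra.coeff_add]
  exact Finsupp.sum_add_index' (gto_zero n) (gto_add n)

lemma toL_smul (c : ℝ) (p : Rg d) (n : MIdx d) : toL (c • p) n = c • toL p n := by
  simp only [toL_eq_sum]
  rw [show AddMonoidAlgebra.coeff (c • p : Rg d) = c • AddMonoidAlgebra.coeff p from rfl]
  rw [Finsupp.sum_smul_index' (fun β => gto_zero n β)]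
  rw [Finsupp.smul_sum]
  exact Finsupp.sum_congr fun β _ => gto_mul n β c _

/-- `toL` as a linear map. -/
noncomputable def toLHom (n : MIdx d) : Rg d →ₗ[ℝ] LSpace d where
  toFun p := toL p n
  map_add' p q := toL_add p q n
  map_smul' c p := toL_smul c p n

lemma toLHom_apply (p : Rg d) (n : MIdx d) : toLHom n p = toL p n := rfl

lemma toL_monomial (β : Var d →₀ ℕ) (c : ℝ) (n : MIdx d) :
    toL (monomial β c : Rg d) n = gto n β c := by
  rw [toL_eq_sum]
  rw [show AddMonoidAlgebra.coeff (monomial β c : Rg d) = Finsupp.single β c from rfl]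
  exact Finsupp.sum_single_index (gto_zero n β)

end ToL

/-! ### Evaluation of the bilinear extensions -/

section Plumbing
variable {d : ℕ}

lemma single_eq_smul_ofL (a : LBasis d) (c : ℝ) :
    (Finsupp.single a c : LSpace d) = c • ofL a := by
  simp [ofL, Finsupp.smul_single]

lemma brL_ofL (a b : LBasis d) : brL (ofL a) (ofL b) = brL0 a b := by
  simp [brL, ofL, Finsupp.lift_apply, Finsupp.sum_single_index]

lemma triL_ofL (a b : LBasis d) : triL (ofL a) (ofL b) = triL0 a b := by
  simp [triL, ofL, Finsupp.lift_apply, Finsupp.sum_single_index]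

lemma bilin_toL_left (B : LSpace d →ₗ[ℝ] LSpace d →ₗ[ℝ] LSpace d)
    (p : Rg d) (n : MIdx d) (y : LSpace d) :
    B (toL p n) y = ∑ β ∈ p.support,
      (if h : 0 ≤ bc β then coeff β p • B (ofL (.inl ⟨(β, n), h⟩)) y else 0) := by
  rw [toL, map_sum, LinearMap.coe_sum, Finset.sum_apply]
  refine Finset.sum_congr rfl fun β _ => ?_
  split
  · show B (coeff β p • ofL _) y = _
    rw [map_smul, LinearMap.smul_apply]
  · rw [map_zero]; rfl

lemma bilin_toL_right (B : LSpace d →ₗ[ℝ] LSpace d →ₗ[ℝ] LSpace d)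
    (x : LSpace d) (p : Rg d) (n : MIdx d) :
    B x (toL p n) = ∑ β ∈ p.support,
      (if h : 0 ≤ bc β then coeff β p • B x (ofL (.inl ⟨(β, n), h⟩)) else 0) := by
  rw [toL, map_sum]
  refine Finset.sum_congr rfl fun β _ => ?_
  split
  · show B x (coeff β p • ofL _) = _
    rw [map_smul]
  · rw [map_zero]

end Plumbing
/-! ### Evaluation lemmas for `brL0`, `triL0` -/

section Eval0
variable {d : ℕ}

@[simp] lemma brL0_inl_inl (a b : {p : (Var d →₀ ℕ) × MIdx d // 0 ≤ bc p.1}) :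
    brL0 (.inl a) (.inl b) = 0 := by
  obtain ⟨⟨γ, n⟩, h⟩ := a; obtain ⟨⟨γ', n'⟩, h'⟩ := b; rfl

@[simp] lemma brL0_inr_inr (i j : Fin (d+1)) :
    brL0 (d := d) (.inr i) (.inr j) = 0 := rfl

lemma brL0_inl_inr (γ : Var d →₀ ℕ) (n : MIdx d) (h : 0 ≤ bc γ) (i : Fin (d+1)) :
    brL0 (.inl ⟨(γ, n), h⟩) (.inr i)
      = (n i : ℝ) • Finsupp.single (.inl ⟨(γ, n - eVec d i), h⟩) 1 := rfl

lemma brL0_inr_inl (γ : Var d →₀ ℕ) (n : MIdx d) (h : 0 ≤ bc γ) (i : Fin (d+1)) :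
    brL0 (.inr i) (.inl ⟨(γ, n), h⟩)
      = -((n i : ℝ) • Finsupp.single (.inl ⟨(γ, n - eVec d i), h⟩) 1) := rfl

/-- The derivation attached to a basis symbol. -/
noncomputable def Dofb : LBasis d → Derivation ℝ (Rg d) (Rg d)
  | .inl x => zD x.1.1 x.1.2
  | .inr i => partialOp i

lemma triL0_inl (a : LBasis d) (γ : Var d →₀ ℕ) (n : MIdx d) (h : 0 ≤ bc γ) :
    triL0 a (.inl ⟨(γ, n), h⟩) = toL (Dofb a (monomial γ (1:ℝ))) n := by
  rcases a with ⟨⟨γ₀, n₀⟩, h₀⟩ | i <;> rfl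

@[simp] lemma triL0_inr (a : LBasis d) (i : Fin (d+1)) : triL0 a (.inr i) = 0 := by
  rcases a with ⟨⟨γ₀, n₀⟩, h₀⟩ | j <;> rfl

lemma triL0_inl_inl (γ : Var d →₀ ℕ) (n : MIdx d) (h : 0 ≤ bc γ)
    (γ' : Var d →₀ ℕ) (n' : MIdx d) (h' : 0 ≤ bc γ') :
    triL0 (.inl ⟨(γ, n), h⟩) (.inl ⟨(γ', n'), h'⟩)
      = toL (zD γ n (monomial γ' (1:ℝ))) n' := rfl

end Eval0

/-! ### Antisymmetry -/

section Anti
variable {d : ℕ}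

lemma brL0_antisymm (a b : LBasis d) : brL0 a b = -brL0 b a := by
  rcases a with ⟨⟨γ, n⟩, h⟩ | i <;> rcases b with ⟨⟨γ', n'⟩, h'⟩ | j <;>
    simp [brL0_inl_inr, brL0_inr_inl]

lemma brL_antisymm (x y : LSpace d) : brL x y = -brL y x := by
  induction x using Finsupp.induction_linear with
  | zero => simp
  | add f g hf hg => simp only [map_add, LinearMap.add_apply, hf, hg]; abel
  | single a c =>
    induction y using Finsupp.induction_linear with
    | zero => simp
    | add f g hf hg => simp only [map_add, LinearMap.add_apply, hf, hg]; abel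
    | single b c' =>
      rw [single_eq_smul_ofL, single_eq_smul_ofL]
      simp only [map_smul, LinearMap.smul_apply, brL_ofL, brL0_antisymm a b]
      rw [smul_comm]
      simp

end Anti
/-! ### Jacobi identity -/

section Jacobi
variable {d : ℕ}

lemma brL_ofL_smul_single (a u : LBasis d) (c : ℝ) :
    brL (ofL a) (c • Finsupp.single u (1 : ℝ)) = c • brL0 a u := by
  rw [map_smul, show (Finsupp.single u (1:ℝ) : LSpace d) = ofL u from rfl, brL_ofL]

lemma jac_core (γ : Var d →₀ ℕ) (n : MIdx d) (h : 0 ≤ bc γ) (i j : Fin (d+1)) :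
    brL (ofL (.inr i)) (brL0 (.inr j) (.inl ⟨(γ, n), h⟩))
      + brL (ofL (.inr j)) (brL0 (.inl ⟨(γ, n), h⟩) (.inr i)) = 0 := by
  rw [brL0_inr_inl, brL0_inl_inr, map_neg, brL_ofL_smul_single, brL_ofL_smul_single,
    brL0_inr_inl, brL0_inr_inl]
  by_cases hij : i = j
  · subst hij; abel
  · rw [sub_eVec_apply_ne n (fun hh => hij hh.symm), sub_eVec_apply_ne n hij,
      sub_eVec_comm n j i]
    module

lemma jac0 (a b c : LBasis d) :
    brL (ofL a) (brL0 b c) + brL (ofL b) (brL0 c a) + brL (ofL c) (brL0 a b) = 0 := by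
  rcases a with ⟨⟨γa, na⟩, ha⟩ | i <;> rcases b with ⟨⟨γb, nb⟩, hb⟩ | j <;>
    rcases c with ⟨⟨γc, nc⟩, hc⟩ | k
  · simp
  · -- inl inl inr
    rw [brL0_inl_inr, brL0_inr_inl]
    simp only [map_neg, brL_ofL_smul_single, brL0_inl_inl, brL0_inl_inr]
    simp
  · -- inl inr inl
    rw [brL0_inr_inl, brL0_inl_inr]
    simp only [map_neg, brL_ofL_smul_single, brL0_inl_inl]
    simp
  · -- inl inr inr
    have := jac_core γa na ha j k
    simp only [brL0_inr_inr, map_zero, zero_add] at this ⊢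
    linear_combination (norm := module) this
  · -- inr inl inl
    rw [brL0_inl_inr, brL0_inr_inl]
    simp only [map_neg, brL_ofL_smul_single, brL0_inl_inl]
    simp
  · -- inr inl inr
    have := jac_core γb nb hb k i
    simp only [brL0_inr_inr, map_zero, zero_add, add_zero] at this ⊢
    linear_combination (norm := module) this
  · -- inr inr inl
    have := jac_core γc nc hc i j
    simp only [brL0_inr_inr, map_zero, zero_add, add_zero] at this ⊢
    linear_combination (norm := module) this
  · simp

lemma brL_jacobi (x y z : LSpace d) :
    brL x (brL y z) + brL y (brL z x) + brL z (brL x y) = 0 := by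
  induction x using Finsupp.induction_linear with
  | zero => simp
  | add f g hf hg =>
    simp only [map_add, LinearMap.add_apply]
    linear_combination (norm := module) hf + hg
  | single a ca =>
    induction y using Finsupp.induction_linear with
    | zero => simp
    | add f g hf hg =>
      simp only [map_add, LinearMap.add_apply]
      linear_combination (norm := module) hf + hg
    | single b cb =>
      induction z using Finsupp.induction_linear with
      | zero => simp
      | add f g hf hg =>
        simp only [map_add, LinearMap.add_apply]
        linear_combination (norm := module) hf + hg
      | single c cc =>
        rw [single_eq_smul_ofL, single_eq_smul_ofL, single_eq_smul_ofL]
        have := jac0 a b c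
        simp only [map_smul, LinearMap.smul_apply, brL_ofL]
        linear_combination (norm := module) (ca * cb * cc) • this

end Jacobi
/-! ### Pairing lemmas between `toL` and the operations -/

section PLemmas
variable {d : ℕ}

lemma brL_toL_inr (p : Rg d) (n : MIdx d) (i : Fin (d+1)) :
    brL (toL p n) (ofL (.inr i)) = (n i : ℝ) • toL p (n - eVec d i) := by
  rw [bilin_toL_left brL p n, toL, Finset.smul_sum]
  refine Finset.sum_congr rfl fun β hβ => ?_
  by_cases h : 0 ≤ bc β
  · rw [dif_pos h, dif_pos h, brL_ofL, brL0_inl_inr, smul_comm]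
  · rw [dif_neg h, dif_neg h, smul_zero]

lemma brL_inr_toL (p : Rg d) (n : MIdx d) (i : Fin (d+1)) :
    brL (ofL (.inr i)) (toL p n) = -((n i : ℝ) • toL p (n - eVec d i)) := by
  rw [brL_antisymm, brL_toL_inr]

lemma brL_toL_inl (p : Rg d) (n : MIdx d) (b : {p : (Var d →₀ ℕ) × MIdx d // 0 ≤ bc p.1}) :
    brL (toL p n) (ofL (.inl b)) = 0 := by
  rw [bilin_toL_left brL p n]
  refine Finset.sum_eq_zero fun β hβ => ?_
  by_cases h : 0 ≤ bc β
  · rw [dif_pos h, brL_ofL, brL0_inl_inl, smul_zero]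
  · rw [dif_neg h]

lemma brL_inl_toL (p : Rg d) (n : MIdx d) (b : {p : (Var d →₀ ℕ) × MIdx d // 0 ≤ bc p.1}) :
    brL (ofL (.inl b)) (toL p n) = 0 := by
  rw [brL_antisymm, brL_toL_inl, neg_zero]

lemma triL_toL_inr (p : Rg d) (n : MIdx d) (i : Fin (d+1)) :
    triL (toL p n) (ofL (.inr i)) = 0 := by
  rw [bilin_toL_left triL p n]
  refine Finset.sum_eq_zero fun β hβ => ?_
  by_cases h : 0 ≤ bc β
  · rw [dif_pos h, triL_ofL, triL0_inr, smul_zero]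
  · rw [dif_neg h]

lemma triL_ofL_toL (a : LBasis d) (p : Rg d) (n : MIdx d)
    (hp : ∀ β ∈ p.support, 0 ≤ bc β) :
    triL (ofL a) (toL p n) = toL (Dofb a p) n := by
  rw [bilin_toL_right triL (ofL a) p n]
  have step : ∀ β ∈ p.support,
      (if h : 0 ≤ bc β then coeff β p • triL (ofL a) (ofL (.inl ⟨(β, n), h⟩)) else 0)
        = ((toLHom n).comp (Dofb a).toLinearMap) (monomial β (coeff β p)) := by
    intro β hβ
    rw [dif_pos (hp β hβ), triL_ofL, triL0_inl]
    have : (monomial β (coeff β p) : Rg d) = coeff β p • monomial β 1 := by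
      rw [MvPolynomial.smul_monomial, smul_eq_mul, mul_one]
    rw [this, LinearMap.comp_apply, map_smul, map_smul]
    rfl
  rw [Finset.sum_congr rfl step, ← map_sum, ← MvPolynomial.as_sum]
  rfl

lemma triL_toL_inl (p : Rg d) (n : MIdx d)
    (γ : Var d →₀ ℕ) (m : MIdx d) (hγ : 0 ≤ bc γ)
    (hp : ∀ β ∈ p.support, 0 ≤ bc β) :
    triL (toL p n) (ofL (.inl ⟨(γ, m), hγ⟩))
      = toL (p * Dop n (monomial γ (1:ℝ))) m := by
  rw [bilin_toL_left triL p n]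
  have step : ∀ β ∈ p.support,
      (if h : 0 ≤ bc β then
          coeff β p • triL (ofL (.inl ⟨(β, n), h⟩)) (ofL (.inl ⟨(γ, m), hγ⟩)) else 0)
        = ((toLHom m).comp (LinearMap.mulRight ℝ (Dop n (monomial γ (1:ℝ)))))
            (monomial β (coeff β p)) := by
    intro β hβ
    rw [dif_pos (hp β hβ), triL_ofL, triL0_inl_inl]
    rw [zD, Derivation.smul_apply, smul_eq_mul]
    rw [LinearMap.comp_apply, LinearMap.mulRight_apply, toLHom_apply]
    rw [show (monomial β (coeff β p) : Rg d) * Dop n (monomial γ (1:ℝ))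
        = coeff β p • (monomial β 1 * Dop n (monomial γ (1:ℝ))) by
      rw [← smul_mul_assoc, MvPolynomial.smul_monomial, smul_eq_mul, mul_one]]
    rw [toL_smul]
  rw [Finset.sum_congr rfl step, ← map_sum, ← MvPolynomial.as_sum]
  rfl

end PLemmas

/-! ### `triL` is a derivation of the bracket -/

section Part3
variable {d : ℕ}

lemma tri_der_0 (a b c : LBasis d) :
    triL (ofL a) (brL0 b c) = brL (triL0 a b) (ofL c) + brL (ofL b) (triL0 a c) := by
  rcases b with ⟨⟨γ, n⟩, h⟩ | i
  · rcases c with ⟨⟨γ', n'⟩, h'⟩ | i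
    · rw [brL0_inl_inl, map_zero, triL0_inl, triL0_inl, brL_toL_inl, brL_inl_toL, add_zero]
    · rw [brL0_inl_inr, triL0_inr, map_zero, add_zero, triL0_inl, brL_toL_inr]
      rw [show ((n i : ℝ) • Finsupp.single (Sum.inl ⟨(γ, n - eVec d i), h⟩) (1:ℝ))
          = (n i : ℝ) • ofL (.inl ⟨(γ, n - eVec d i), h⟩) from rfl]
      rw [map_smul, triL_ofL, triL0_inl]
  · rcases c with ⟨⟨γ', n'⟩, h'⟩ | j
    · rw [brL0_inr_inl, triL0_inr, map_zero, LinearMap.zero_apply, zero_add,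
        triL0_inl, brL_inr_toL]
      rw [show ((n' i : ℝ) • Finsupp.single (Sum.inl ⟨(γ', n' - eVec d i), h'⟩) (1:ℝ))
          = (n' i : ℝ) • ofL (.inl ⟨(γ', n' - eVec d i), h'⟩) from rfl]
      rw [map_neg, map_smul, triL_ofL, triL0_inl]
    · rw [brL0_inr_inr, map_zero, triL0_inr, triL0_inr, map_zero, map_zero,
        LinearMap.zero_apply, add_zero]

lemma triL_der (x y z : LSpace d) :
    triL x (brL y z) = brL (triL x y) z + brL y (triL x z) := by
  induction x using Finsupp.induction_linear with
  | zero => simp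
  | add f g hf hg =>
    simp only [map_add, LinearMap.add_apply]
    linear_combination (norm := module) hf + hg
  | single a ca =>
    induction y using Finsupp.induction_linear with
    | zero => simp
    | add f g hf hg =>
      simp only [map_add, LinearMap.add_apply]
      linear_combination (norm := module) hf + hg
    | single b cb =>
      induction z using Finsupp.induction_linear with
      | zero => simp
      | add f g hf hg =>
        simp only [map_add, LinearMap.add_apply]
        linear_combination (norm := module) hf + hg
      | single c cc =>
        rw [single_eq_smul_ofL, single_eq_smul_ofL, single_eq_smul_ofL]
        have := tri_der_0 a b c
        simp only [map_smul, LinearMap.smul_apply, brL_ofL, triL_ofL]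
        linear_combination (norm := module) (ca * cb * cc) • this

end Part3
/-! ### Commutation relations between the derivations -/

section Comm
variable {d : ℕ}

lemma Dop_comm (n m : MIdx d) (q : Rg d) : Dop n (Dop m q) = Dop m (Dop n q) := by
  suffices h : (⁅Dop n, Dop m⁆ : Derivation ℝ (Rg d) (Rg d)) = 0 by
    have := DFunLike.congr_fun h q
    rw [Derivation.commutator_apply] at this
    have h0 : (0 : Derivation ℝ (Rg d) (Rg d)) q = 0 := rfl
    rw [h0] at this
    exact sub_eq_zero.mp this
  refine MvPolynomial.derivation_ext fun v => ?_
  rw [Derivation.commutator_apply]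
  have h0 : (0 : Derivation ℝ (Rg d) (Rg d)) (X v) = 0 := rfl
  rw [h0, sub_eq_zero]
  by_cases hn : n = 0 <;> by_cases hm : m = 0
  · subst hn; subst hm; rfl
  · subst hn
    rcases v with k | mv
    · rw [Dop_X_inl hm, map_zero, Dop_zero_X_inl, Derivation.map_smul, Dop_X_inl hm, smul_zero]
    · rw [Dop_X_inr hm, Dop_zero_X_inr, map_zero]
      split_ifs
      · rw [Derivation.map_one_eq_zero]
      · rw [map_zero]
  · subst hm
    rcases v with k | mv
    · rw [Dop_X_inl hn, map_zero, Dop_zero_X_inl, Derivation.map_smul, Dop_X_inl hn, smul_zero]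
    · rw [Dop_X_inr hn, Dop_zero_X_inr, map_zero]
      split_ifs
      · rw [Derivation.map_one_eq_zero]
      · rw [map_zero]
  · rcases v with k | mv
    · rw [Dop_X_inl hm, Dop_X_inl hn, map_zero, map_zero]
    · rw [Dop_X_inr hm, Dop_X_inr hn]
      split_ifs <;> simp [Derivation.map_one_eq_zero]

lemma eVec_apply_symm (i j : Fin (d+1)) : eVec d j i = eVec d i j := by
  simp [eVec_apply, eq_comm]

lemma partialOp_comm (i j : Fin (d+1)) (q : Rg d) :
    partialOp i (partialOp j q) = partialOp j (partialOp i q) := by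
  suffices h : (⁅partialOp (d := d) i, partialOp j⁆ : Derivation ℝ (Rg d) (Rg d)) = 0 by
    have := DFunLike.congr_fun h q
    rw [Derivation.commutator_apply] at this
    have h0 : (0 : Derivation ℝ (Rg d) (Rg d)) q = 0 := rfl
    rw [h0, sub_eq_zero] at this
    exact this
  refine MvPolynomial.derivation_ext fun v => ?_
  rw [Derivation.commutator_apply]
  have h0 : (0 : Derivation ℝ (Rg d) (Rg d)) (X v) = 0 := rfl
  rw [h0, sub_eq_zero]
  by_cases hij : i = j
  · subst hij; rfl
  rcases v with k | mv
  · rw [partialOp_X_inl, partialOp_X_inl, Derivation.map_smul, Derivation.map_smul,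
      Derivation.leibniz, Derivation.leibniz,
      partialOp_X_inl, partialOp_X_inl, partialOp_X_inr, partialOp_X_inr]
    dsimp only
    have he : (⟨eVec d j + eVec d i, add_eVec_ne_zero _ i⟩ : {n : MIdx d // n ≠ 0})
        = ⟨eVec d i + eVec d j, add_eVec_ne_zero _ j⟩ := Subtype.ext (add_comm _ _)
    rw [he, eVec_apply_symm]
    simp only [smul_eq_mul, MvPolynomial.smul_eq_C_mul, C_1, map_one]
    ring
  · rw [partialOp_X_inr, Derivation.map_smul, partialOp_X_inr, partialOp_X_inr, Derivation.map_smul,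
      partialOp_X_inr]
    dsimp only
    have he : (⟨mv.val + eVec d j + eVec d i, add_eVec_ne_zero _ i⟩ : {n : MIdx d // n ≠ 0})
        = ⟨mv.val + eVec d i + eVec d j, add_eVec_ne_zero _ j⟩ :=
      Subtype.ext (add_right_comm _ _ _)
    rw [he]
    rw [smul_smul, smul_smul]
    congr 1
    have hji : ¬ j = i := fun h => hij h.symm
    have h1 : (mv.val + eVec d j) i = mv.val i := by
      simp [Pi.add_apply, eVec_apply, hij]
    have h2 : (mv.val + eVec d i) j = mv.val j := by
      simp [Pi.add_apply, eVec_apply, hji]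
    rw [h1, h2]
    push_cast
    ring

lemma eVec_sub_self (i : Fin (d+1)) : eVec d i - eVec d i = (0 : MIdx d) := by
  funext j; simp

lemma Dop_partial_comm (n : MIdx d) (i : Fin (d+1)) (q : Rg d) :
    Dop n (partialOp i q) - partialOp i (Dop n q)
      = (n i : ℝ) • Dop (n - eVec d i) q := by
  suffices h : (⁅Dop n, partialOp i⁆ : Derivation ℝ (Rg d) (Rg d))
      = (n i : ℝ) • Dop (n - eVec d i) by
    have := DFunLike.congr_fun h q
    rw [Derivation.commutator_apply, Derivation.smul_apply] at this
    exact this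
  refine MvPolynomial.derivation_ext fun v => ?_
  rw [Derivation.commutator_apply, Derivation.smul_apply]
  by_cases hn : n = 0
  · subst hn
    have hni : ((0 : MIdx d) i : ℝ) = 0 := by simp
    rw [hni, zero_smul]
    rcases v with k | mv
    · rw [partialOp_X_inl, Dop_zero_X_inl, Derivation.map_smul, Derivation.map_smul,
        Derivation.leibniz, Dop_zero_X_inl, Dop_zero_X_inr,
        partialOp_X_inl]
      simp only [smul_eq_mul, MvPolynomial.smul_eq_C_mul, smul_zero]
      ring
    · rw [partialOp_X_inr, Dop_zero_X_inr, map_zero, Derivation.map_smul, Dop_zero_X_inr,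
        smul_zero, sub_zero]
  · rcases v with k | mv
    · rw [partialOp_X_inl, Dop_X_inl hn, map_zero, Derivation.map_smul, Derivation.leibniz,
        Dop_X_inl hn, Dop_X_inr hn, sub_zero]
      by_cases hne : n = eVec d i
      · have hsub : n - eVec d i = 0 := by rw [hne]; exact eVec_sub_self i
        have hni : n i = 1 := by rw [hne]; simp [eVec_apply]
        rw [hsub, Dop_zero_X_inl, hni]
        rw [if_pos hne.symm]
        simp only [smul_eq_mul, MvPolynomial.smul_eq_C_mul, smul_zero, mul_zero, mul_one,
          C_1, map_one]
        push_cast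
        ring_nf
        simp
      · have hsub : n - eVec d i ≠ 0 := by
          intro hc
          rcases sub_eVec_eq_zero hc with h | h
          · exact hn h
          · exact hne h
        rw [if_neg (fun hh : eVec d i = n => hne hh.symm), Dop_X_inl hsub]
        simp
    · rw [partialOp_X_inr, Dop_X_inr hn, Derivation.map_smul, Dop_X_inr hn]
      have hpi : partialOp (d := d) i (if mv.val = n then 1 else 0) = 0 := by
        split_ifs
        · exact Derivation.map_one_eq_zero _
        · exact map_zero _
      rw [hpi, sub_zero]
      by_cases hmn : mv.val + eVec d i = n
      · have hsub : n - eVec d i = mv.val := by rw [← hmn]; exact add_eVec_sub_cancel _ i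
        have hsub0 : n - eVec d i ≠ 0 := by rw [hsub]; exact mv.2
        have hni : n i = mv.val i + 1 := by rw [← hmn]; exact add_eVec_apply _ i
        rw [if_pos hmn, Dop_X_inr hsub0, hsub, if_pos rfl, hni]
      · rw [if_neg hmn, smul_zero]
        by_cases hni : n i = 0
        · rw [hni]; norm_num
        by_cases hsub0 : n - eVec d i = 0
        · rw [hsub0, Dop_zero_X_inr, smul_zero]
        · rw [Dop_X_inr hsub0]
          have : ¬ (mv.val = n - eVec d i) := by
            intro hc
            apply hmn
            rw [hc]
            exact sub_eVec_add_cancel hni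
          rw [if_neg this, smul_zero]

end Comm
/-! ### Key polynomial identities -/

section Part4
variable {d : ℕ}

lemma toL_sub (p q : Rg d) (n : MIdx d) : toL (p - q) n = toL p n - toL q n := by
  rw [sub_eq_add_neg, toL_add, show -q = (-1 : ℝ) • q by simp, toL_smul]
  simp [sub_eq_add_neg]

lemma Dofb_inl (γ : Var d →₀ ℕ) (n : MIdx d) (h : 0 ≤ bc γ) :
    Dofb (.inl ⟨(γ, n), h⟩) = zD γ n := rfl

lemma Dofb_inr (i : Fin (d+1)) : Dofb (d := d) (.inr i) = partialOp i := rfl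

lemma bc_Dofb (a : LBasis d) (γ : Var d →₀ ℕ) (hγ : 0 ≤ bc γ) :
    ∀ β ∈ (Dofb a (monomial γ (1:ℝ))).support, 0 ≤ bc β := by
  rcases a with ⟨⟨γ₀, n₀⟩, h₀⟩ | i
  · intro β hβ
    rw [Dofb_inl] at hβ
    have h₀' : 0 ≤ bc γ₀ := h₀
    have := bc_support_zD γ₀ n₀ γ 1 β hβ
    omega
  · intro β hβ
    rw [Dofb_inr] at hβ
    have := bc_support_partialOp i γ 1 β hβ
    omega

lemma key_a (γ₁ : Var d →₀ ℕ) (n₁ : MIdx d) (γ₂ : Var d →₀ ℕ) (n₂ : MIdx d) (q : Rg d) :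
    zD γ₁ n₁ (zD γ₂ n₂ q) - zD γ₁ n₁ (monomial γ₂ (1:ℝ)) * Dop n₂ q
      = monomial γ₂ (1:ℝ) * (monomial γ₁ (1:ℝ) * Dop n₁ (Dop n₂ q)) := by
  simp only [zD, Derivation.smul_apply, smul_eq_mul, Derivation.leibniz]
  ring

lemma key_sym (γ₁ : Var d →₀ ℕ) (n₁ : MIdx d) (γ₂ : Var d →₀ ℕ) (n₂ : MIdx d) (q : Rg d) :
    zD γ₁ n₁ (zD γ₂ n₂ q) - zD γ₁ n₁ (monomial γ₂ (1:ℝ)) * Dop n₂ q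
      = zD γ₂ n₂ (zD γ₁ n₁ q) - zD γ₂ n₂ (monomial γ₁ (1:ℝ)) * Dop n₁ q := by
  rw [key_a, key_a, Dop_comm]
  ring

lemma key_b (γ : Var d →₀ ℕ) (n : MIdx d) (i : Fin (d+1)) (q : Rg d) :
    zD γ n (partialOp i q) - partialOp i (zD γ n q)
        + partialOp i (monomial γ (1:ℝ)) * Dop n q
      = (n i : ℝ) • zD γ (n - eVec d i) q := by
  have hcomm := Dop_partial_comm n i q
  simp only [zD, Derivation.smul_apply, smul_eq_mul, Derivation.leibniz]
  rw [show Dop n (partialOp i q)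
      = (n i : ℝ) • Dop (n - eVec d i) q + partialOp i (Dop n q) from
    sub_eq_iff_eq_add.mp hcomm]
  simp only [MvPolynomial.smul_eq_C_mul]
  ring

/-! ### Basis-level post-Lie identity -/

lemma post0_ll (γ₁ : Var d →₀ ℕ) (n₁ : MIdx d) (h₁ : 0 ≤ bc γ₁)
    (γ₂ : Var d →₀ ℕ) (n₂ : MIdx d) (h₂ : 0 ≤ bc γ₂) (c : LBasis d) :
    triL (brL0 (.inl ⟨(γ₁, n₁), h₁⟩) (.inl ⟨(γ₂, n₂), h₂⟩)) (ofL c)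
      = (triL (ofL (.inl ⟨(γ₁, n₁), h₁⟩)) (triL0 (.inl ⟨(γ₂, n₂), h₂⟩) c)
          - triL (triL0 (.inl ⟨(γ₁, n₁), h₁⟩) (.inl ⟨(γ₂, n₂), h₂⟩)) (ofL c))
        - (triL (ofL (.inl ⟨(γ₂, n₂), h₂⟩)) (triL0 (.inl ⟨(γ₁, n₁), h₁⟩) c)
          - triL (triL0 (.inl ⟨(γ₂, n₂), h₂⟩) (.inl ⟨(γ₁, n₁), h₁⟩)) (ofL c)) := by
  rw [brL0_inl_inl, map_zero, LinearMap.zero_apply]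
  rcases c with ⟨⟨γ, n⟩, h⟩ | i
  · have hgc : 0 ≤ bc γ := h
    rw [triL0_inl_inl, triL0_inl_inl, triL0_inl_inl, triL0_inl_inl]
    rw [triL_ofL_toL _ _ _ (fun β hβ => by
        have := bc_support_zD γ₂ n₂ γ 1 β hβ; omega),
      triL_ofL_toL _ _ _ (fun β hβ => by
        have := bc_support_zD γ₁ n₁ γ 1 β hβ; omega),
      triL_toL_inl _ _ _ _ h (fun β hβ => by
        have := bc_support_zD γ₁ n₁ γ₂ 1 β hβ; omega),
      triL_toL_inl _ _ _ _ h (fun β hβ => by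
        have := bc_support_zD γ₂ n₂ γ₁ 1 β hβ; omega)]
    rw [Dofb_inl, Dofb_inl, ← toL_sub, ← toL_sub, key_sym, sub_self]
  · rw [triL0_inr, triL0_inr, map_zero, map_zero, triL0_inl_inl, triL0_inl_inl,
      triL_toL_inr, triL_toL_inr]
    simp

lemma post0_lr (γ : Var d →₀ ℕ) (n : MIdx d) (h : 0 ≤ bc γ) (i : Fin (d+1))
    (c : LBasis d) :
    triL (brL0 (.inl ⟨(γ, n), h⟩) (.inr i)) (ofL c)
      = (triL (ofL (.inl ⟨(γ, n), h⟩)) (triL0 (.inr i) c)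
          - triL (triL0 (.inl ⟨(γ, n), h⟩) (.inr i)) (ofL c))
        - (triL (ofL (.inr i)) (triL0 (.inl ⟨(γ, n), h⟩) c)
          - triL (triL0 (.inr i) (.inl ⟨(γ, n), h⟩)) (ofL c)) := by
  rw [brL0_inl_inr, triL0_inr, map_zero, LinearMap.zero_apply,
    show ((n i : ℝ) • Finsupp.single (Sum.inl ⟨(γ, n - eVec d i), h⟩) (1:ℝ) : LSpace d)
      = (n i : ℝ) • ofL (.inl ⟨(γ, n - eVec d i), h⟩) from rfl,
    map_smul, LinearMap.smul_apply, triL_ofL]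
  rcases c with ⟨⟨γ', n'⟩, h'⟩ | j
  · have hgc : 0 ≤ bc γ' := h'
    have hg : 0 ≤ bc γ := h
    rw [triL0_inl _ γ' n' h', triL0_inl _ γ' n' h', triL0_inl _ γ' n' h',
      triL0_inl _ γ n h, Dofb_inl, Dofb_inl, Dofb_inr]
    rw [triL_ofL_toL _ _ _ (fun β hβ => by
        have := bc_support_partialOp i γ' 1 β hβ; omega),
      triL_ofL_toL _ _ _ (fun β hβ => by
        have := bc_support_zD γ n γ' 1 β hβ; omega),
      triL_toL_inl _ _ _ _ h' (fun β hβ => by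
        have := bc_support_partialOp i γ 1 β hβ; omega)]
    rw [Dofb_inl, Dofb_inr]
    have hk := key_b γ n i (monomial γ' (1:ℝ))
    rw [← toL_smul, ← hk, sub_zero]
    dsimp only
    rw [← toL_sub, ← toL_sub]
    congr 1
    ring
  · rw [triL0_inl (Sum.inr i) γ n h, Dofb_inr]
    simp [triL_toL_inr]

lemma post0 (a b c : LBasis d) :
    triL (brL0 a b) (ofL c)
      = (triL (ofL a) (triL0 b c) - triL (triL0 a b) (ofL c))
        - (triL (ofL b) (triL0 a c) - triL (triL0 b a) (ofL c)) := by
  rcases a with ⟨⟨γ₁, n₁⟩, h₁⟩ | i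
  · rcases b with ⟨⟨γ₂, n₂⟩, h₂⟩ | j
    · exact post0_ll γ₁ n₁ h₁ γ₂ n₂ h₂ c
    · exact post0_lr γ₁ n₁ h₁ j c
  · rcases b with ⟨⟨γ₂, n₂⟩, h₂⟩ | j
    · have H := post0_lr γ₂ n₂ h₂ i c
      rw [brL0_antisymm, map_neg, LinearMap.neg_apply, H]
      abel
    · -- both partials
      rw [brL0_inr_inr, map_zero, LinearMap.zero_apply]
      rcases c with ⟨⟨γ, n⟩, h⟩ | k
      · have hg : 0 ≤ bc γ := h
        rw [triL0_inl (Sum.inr j) γ n h, triL0_inl (Sum.inr i) γ n h,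
          Dofb_inr, Dofb_inr]
        rw [triL_ofL_toL _ _ _ (fun β hβ => by
            have := bc_support_partialOp j γ 1 β hβ; omega),
          triL_ofL_toL _ _ _ (fun β hβ => by
            have := bc_support_partialOp i γ 1 β hβ; omega)]
        rw [Dofb_inr, Dofb_inr, partialOp_comm]
        simp
      · simp

end Part4
section Final
variable {d : ℕ}

lemma triL_post (x y z : LSpace d) :
    triL (brL x y) z
      = (triL x (triL y z) - triL (triL x y) z)
        - (triL y (triL x z) - triL (triL y x) z) := by
  induction x using Finsupp.induction_linear with
  | zero => simp
  | add f g hf hg =>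
    simp only [map_add, LinearMap.add_apply]
    linear_combination (norm := module) hf + hg
  | single a ca =>
    induction y using Finsupp.induction_linear with
    | zero => simp
    | add f g hf hg =>
      simp only [map_add, LinearMap.add_apply]
      linear_combination (norm := module) hf + hg
    | single b cb =>
      induction z using Finsupp.induction_linear with
      | zero => simp
      | add f g hf hg =>
        simp only [map_add, LinearMap.add_apply]
        linear_combination (norm := module) hf + hg
      | single c cc =>
        rw [single_eq_smul_ofL, single_eq_smul_ofL, single_eq_smul_ofL]
        have := post0 a b c
        simp only [map_smul, LinearMap.smul_apply, brL_ofL, triL_ofL]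
        linear_combination (norm := module) (ca * cb * cc) • this

end Final

/-- `(L, [·,·]_0, ▶̂)` is a post-Lie algebra: `[·,·]_0` is a Lie bracket,
`x ▶̂ ·` is a derivation of `[·,·]_0`, and
`[x,y]_0 ▶̂ z = a(x,y,z) - a(y,x,z)` with `a(x,y,z) = x ▶̂ (y ▶̂ z) - (x ▶̂ y) ▶̂ z`. -/
theorem multiIndices_postLie {d : ℕ} :
    (∀ x y : LSpace d, brL x y = -brL y x) ∧
    (∀ x y z : LSpace d,
      brL x (brL y z) + brL y (brL z x) + brL z (brL x y) = 0) ∧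
    (∀ x y z : LSpace d,
      triL x (brL y z) = brL (triL x y) z + brL y (triL x z)) ∧
    (∀ x y z : LSpace d,
      triL (brL x y) z
        = (triL x (triL y z) - triL (triL x y) z)
          - (triL y (triL x z) - triL (triL y x) z)) :=
  ⟨brL_antisymm, brL_jacobi, triL_der, triL_post⟩
end

section
/- In a post-Lie algebra (g, [.,.], ▷) with induced Lie bracket [[x,y]] = [x,y] + x▷y - y▷x, the map ρ: g → End(U(g)) defined by ρ(x)(A) = x ▷ A + x·A (where ▷ is the extension of the post-Lie product to U(g) and · is the product of U(g)) satisfies ρ([[x,y]]) = ρ(x)∘ρ(y) - ρ(y)∘ρ(x), i.e., ρ is a Lie algebra representation of (g, [[.,.]]) on U(g). -/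
variable {g : Type*} [LieRing g] [LieAlgebra ℝ g]

/-- The associator `a_▷(x,y,z) = x ▷ (y ▷ z) - (x ▷ y) ▷ z` of a bilinear product. -/
def assoc (t : g →ₗ[ℝ] g →ₗ[ℝ] g) (x y z : g) : g := t x (t y z) - t (t x y) z

/-- The axioms of a post-Lie algebra `(g, [·,·], ▷)`. -/
def IsPostLie (t : g →ₗ[ℝ] g →ₗ[ℝ] g) : Prop :=
  (∀ x y z : g, t x ⁅y, z⁆ = ⁅t x y, z⁆ + ⁅y, t x z⁆) ∧
  (∀ x y z : g, t ⁅x, y⁆ z = assoc t x y z - assoc t y x z)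

/-- The derived Lie bracket `[[x,y]] = [x,y] + x ▷ y - y ▷ x`. -/
def dbr (t : g →ₗ[ℝ] g →ₗ[ℝ] g) (x y : g) : g := ⁅x, y⁆ + t x y - t y x

/-- The universal enveloping algebra of `(g, [·,·])`. -/
abbrev Ug (g : Type*) [LieRing g] [LieAlgebra ℝ g] :=
  UniversalEnvelopingAlgebra ℝ g

noncomputable def ιg (x : g) : Ug g := UniversalEnvelopingAlgebra.ι ℝ x

/-- `T` is the extension of the post-Lie product `▷` to `g ⊗ U(g)`:
`x ▷ 1 = 0`, `x ▷ (ι y) = ι (x ▷ y)`, and `x ▷ ·` is a derivation for the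
product of `U(g)`. -/
def IsPostLieExtension (t : g →ₗ[ℝ] g →ₗ[ℝ] g)
    (T : g →ₗ[ℝ] Ug g →ₗ[ℝ] Ug g) : Prop :=
  (∀ x : g, T x 1 = 0) ∧
  (∀ x y : g, T x (ιg y) = ιg (t x y)) ∧
  (∀ (x : g) (A B : Ug g), T x (A * B) = T x A * B + A * T x B)


/-- A derivation of `U(g)` that kills `1` and all generators is zero. -/
lemma derivation_eq_zero (D : Ug g →ₗ[ℝ] Ug g) (h1 : D 1 = 0)
    (hmul : ∀ A B : Ug g, D (A * B) = D A * B + A * D B)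
    (hι : ∀ z : g, D (ιg z) = 0) : ∀ A : Ug g, D A = 0 := by
  intro A
  obtain ⟨a, rfl⟩ := (show Function.Surjective (UniversalEnvelopingAlgebra.mkAlgHom ℝ g) from
    RingCon.mkₐ_surjective (α := ℝ) (UniversalEnvelopingAlgebra.ringCon ℝ g)) A
  induction a using TensorAlgebra.induction with
  | algebraMap r =>
      rw [AlgHom.commutes, Algebra.algebraMap_eq_smul_one, map_smul, h1, smul_zero]
  | ι z =>
      have : (UniversalEnvelopingAlgebra.mkAlgHom ℝ g)
          (TensorAlgebra.ι ℝ z) = ιg z := rfl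
      rw [this]; exact hι z
  | mul a b ha hb => rw [map_mul, hmul, ha, hb, zero_mul, mul_zero, add_zero]
  | add a b ha hb => rw [map_add, map_add, ha, hb, add_zero]

/-- The key identity: `T` intertwines the derived bracket with the commutator. -/
lemma key_identity (t : g →ₗ[ℝ] g →ₗ[ℝ] g) (ht : IsPostLie t)
    (T : g →ₗ[ℝ] Ug g →ₗ[ℝ] Ug g) (hT : IsPostLieExtension t T)
    (x y : g) (A : Ug g) : T (dbr t x y) A = T x (T y A) - T y (T x A) := by
  obtain ⟨hT1, hTι, hTm⟩ := hT
  set D : Ug g →ₗ[ℝ] Ug g :=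
    T (dbr t x y) - (T x ∘ₗ T y - T y ∘ₗ T x) with hD
  have hzero : ∀ B : Ug g, D B = 0 := by
    apply derivation_eq_zero
    · simp [hD, hT1, map_zero]
    · intro A B
      simp only [hD, LinearMap.sub_apply, LinearMap.comp_apply, hTm, map_add]
      noncomm_ring
    · intro z
      simp only [hD, LinearMap.sub_apply, LinearMap.comp_apply, hTι]
      have expand : dbr t x y = ⁅x, y⁆ + t x y - t y x := rfl
      rw [expand, map_sub, map_add, LinearMap.sub_apply, LinearMap.add_apply]
      have hrel := (ht.2 x y z)
      simp only [assoc] at hrel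
      have : t ⁅x, y⁆ z + t (t x y) z - t (t y x) z
          - (t x (t y z) - t y (t x z)) = 0 := by
        rw [hrel]; abel
      have h2 : ιg (t ⁅x, y⁆ z + t (t x y) z - t (t y x) z)
            - (ιg (t x (t y z)) - ιg (t y (t x z)))
          = ιg (t ⁅x, y⁆ z + t (t x y) z - t (t y x) z
            - (t x (t y z) - t y (t x z))) := by
        simp [ιg, map_sub, map_add]
      rw [h2, this]; simp [ιg]
  have := hzero A
  simp only [hD, LinearMap.sub_apply, LinearMap.comp_apply, sub_eq_zero] at this
  rw [this]

section
attribute [local instance 100] LieRing.ofAssociativeRing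

lemma ιg_bracket (x y : g) : ιg ⁅x, y⁆ = ιg x * ιg y - ιg y * ιg x := by
  have := (UniversalEnvelopingAlgebra.ι ℝ (L := g)).map_lie x y
  simpa [ιg, LieRing.of_associative_ring_bracket] using this
end

/-- The map `ρ(x)(A) = x ▷ A + x·A` is a Lie algebra representation of
`(g, [[·,·]])` on `U(g)`:
`ρ([[x,y]]) = ρ(x) ∘ ρ(y) - ρ(y) ∘ ρ(x)`. -/
theorem postLie_induced_representation (t : g →ₗ[ℝ] g →ₗ[ℝ] g)
    (ht : IsPostLie t) (T : g →ₗ[ℝ] Ug g →ₗ[ℝ] Ug g)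
    (hT : IsPostLieExtension t T) :
    ∀ (x y : g) (A : Ug g),
      T (dbr t x y) A + ιg (dbr t x y) * A
        = (T x (T y A + ιg y * A) + ιg x * (T y A + ιg y * A))
          - (T y (T x A + ιg x * A) + ιg y * (T x A + ιg x * A)) := by
  intro x y A
  obtain ⟨hT1, hTι, hTm⟩ := hT
  have key := key_identity t ht T ⟨hT1, hTι, hTm⟩ x y A
  have expand : dbr t x y = ⁅x, y⁆ + t x y - t y x := rfl
  have hι : ιg (dbr t x y) = ιg ⁅x, y⁆ + ιg (t x y) - ιg (t y x) := by
    rw [expand]; simp [ιg, map_sub, map_add]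
  rw [key, hι, ιg_bracket]
  simp only [map_add, hTm, hTι]
  noncomm_ring
end
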